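/- arXiv:2107.03990 — 2 statements merged into one kernel-verified Lean document; each statement's English description precedes it below -/
import Mathlib

section
/- For any real number a, the 7-dimensional real solvable Lie algebra L(a) with basis e_1,...,e_7 and nonzero brackets [e_3,e_5]=e_2, [e_4,e_6]=e_2, [e_1,e_7]=a e_1, [e_3,e_7]=-e_3, [e_4,e_7]=-a e_4, [e_5,e_7]=e_5, [e_6,e_7]=-e_1+a e_6 is isomorphic (as a Lie algebra) to L(-a). -/
/-- The bracket table of the 7-dimensional solvable Lie algebra `L(a)` of Parry's
family `[7,[6,5],1,3]`: nonzero brackets `[e₃,e₅]=e₂`, `[e₄,e₆]=e₂`, `[e₁,e₇]=a e₁`,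
`[e₃,e₇]=-e₃`, `[e₄,e₇]=-a e₄`, `[e₅,e₇]=e₅`, `[e₆,e₇]=-e₁+a e₆`
(indices shifted down by one). -/
def parryBracket {L : Type*} [AddCommGroup L] [Module ℝ L] (a : ℝ) (e : Fin 7 → L)
    (i j : Fin 7) : L :=
  match i.val, j.val with
  | 2, 4 => e 1
  | 4, 2 => -e 1
  | 3, 5 => e 1
  | 5, 3 => -e 1
  | 0, 6 => a • e 0
  | 6, 0 => -(a • e 0)
  | 2, 6 => -e 2
  | 6, 2 => e 2
  | 3, 6 => -(a • e 3)
  | 6, 3 => a • e 3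
  | 4, 6 => e 4
  | 6, 4 => -e 4
  | 5, 6 => -e 0 + a • e 5
  | 6, 5 => e 0 - a • e 5
  | _, _ => 0

/-- For any real `a`, the Lie algebra `L(a)` is isomorphic to `L(-a)`. -/
theorem parry_iso_neg (a : ℝ)
    (L₁ : Type*) [LieRing L₁] [LieAlgebra ℝ L₁] (e₁ : Module.Basis (Fin 7) ℝ L₁)
    (L₂ : Type*) [LieRing L₂] [LieAlgebra ℝ L₂] (e₂ : Module.Basis (Fin 7) ℝ L₂)
    (h₁ : ∀ i j : Fin 7, ⁅e₁ i, e₁ j⁆ = parryBracket a e₁ i j)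
    (h₂ : ∀ i j : Fin 7, ⁅e₂ i, e₂ j⁆ = parryBracket (-a) e₂ i j) :
    Nonempty (L₁ ≃ₗ⁅ℝ⁆ L₂) := by
  classical
  set v : Fin 7 → L₂ := ![-e₂ 0, e₂ 1, e₂ 4, e₂ 3, -e₂ 2, e₂ 5, -e₂ 6] with hv
  set w : Fin 7 → L₁ := ![-e₁ 0, e₁ 1, -e₁ 4, e₁ 3, e₁ 2, e₁ 5, -e₁ 6] with hw
  set f : L₁ →ₗ[ℝ] L₂ := e₁.constr ℝ v with hf
  set g : L₂ →ₗ[ℝ] L₁ := e₂.constr ℝ w with hg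
  have hfe : ∀ i, f (e₁ i) = v i := fun i => e₁.constr_basis ℝ v i
  have hge : ∀ i, g (e₂ i) = w i := fun i => e₂.constr_basis ℝ w i
  have hf0 : f (e₁ 0) = -e₂ 0 := hfe 0
  have hf1 : f (e₁ 1) = e₂ 1 := hfe 1
  have hf2 : f (e₁ 2) = e₂ 4 := hfe 2
  have hf3 : f (e₁ 3) = e₂ 3 := hfe 3
  have hf4 : f (e₁ 4) = -e₂ 2 := hfe 4
  have hf5 : f (e₁ 5) = e₂ 5 := hfe 5
  have hf6 : f (e₁ 6) = -e₂ 6 := hfe 6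
  have hg0 : g (e₂ 0) = -e₁ 0 := hge 0
  have hg1 : g (e₂ 1) = e₁ 1 := hge 1
  have hg2 : g (e₂ 2) = -e₁ 4 := hge 2
  have hg3 : g (e₂ 3) = e₁ 3 := hge 3
  have hg4 : g (e₂ 4) = e₁ 2 := hge 4
  have hg5 : g (e₂ 5) = e₁ 5 := hge 5
  have hg6 : g (e₂ 6) = -e₁ 6 := hge 6
  have hgf : g.comp f = LinearMap.id := by
    apply e₁.ext
    intro i
    fin_cases i <;>
      simp [hf0, hf1, hf2, hf3, hf4, hf5, hf6, hg0, hg1, hg2, hg3, hg4, hg5, hg6]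
  have hfg : f.comp g = LinearMap.id := by
    apply e₂.ext
    intro i
    fin_cases i <;>
      simp [hf0, hf1, hf2, hf3, hf4, hf5, hf6, hg0, hg1, hg2, hg3, hg4, hg5, hg6]
  -- bilinear maps
  let B1 : L₁ →ₗ[ℝ] L₁ →ₗ[ℝ] L₂ :=
    LinearMap.mk₂ ℝ (fun x y => f ⁅x, y⁆)
      (fun x x' y => by rw [add_lie, map_add])
      (fun c x y => by rw [smul_lie, map_smul])
      (fun x y y' => by rw [lie_add, map_add])
      (fun c x y => by rw [lie_smul, map_smul])
  let B2 : L₁ →ₗ[ℝ] L₁ →ₗ[ℝ] L₂ :=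
    LinearMap.mk₂ ℝ (fun x y => ⁅f x, f y⁆)
      (fun x x' y => by rw [map_add, add_lie])
      (fun c x y => by rw [map_smul, smul_lie])
      (fun x y y' => by rw [map_add, lie_add])
      (fun c x y => by rw [map_smul, lie_smul])
  have key : B1 = B2 := by
    apply e₁.ext
    intro i
    apply e₁.ext
    intro j
    show f ⁅e₁ i, e₁ j⁆ = ⁅f (e₁ i), f (e₁ j)⁆
    fin_cases i <;> fin_cases j <;>
      simp [h₁, h₂, parryBracket, hf0, hf1, hf2, hf3, hf4, hf5, hf6,
        smul_sub, smul_add, sub_eq_add_neg, neg_smul, smul_neg,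
        neg_neg, neg_add_rev, map_add, map_neg, map_smul] <;>
      abel
  have keylie : ∀ x y : L₁, f ⁅x, y⁆ = ⁅f x, f y⁆ := by
    intro x y
    have := LinearMap.congr_fun (LinearMap.congr_fun key x) y
    simpa [B1, B2] using this
  refine ⟨{ toLinearMap := f, map_lie' := fun {x y} => keylie x y, invFun := g,
            left_inv := fun x => ?_, right_inv := fun x => ?_ }⟩
  · exact LinearMap.congr_fun hgf x
  · exact LinearMap.congr_fun hfg x
end

section
/- If L is a 7-dimensional solvable Lie algebra over a field of characteristic zero whose nilradical N(L) has dimension 5, then the center Z(L) of L has dimension at most 3; moreover, if N(L) ≅ g_{5,2}, then dim Z(L) ≤ 1. -/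
set_option linter.unusedSectionVars false
set_option linter.unusedVariables false
set_option maxHeartbeats 1000000

/-- Bracket table of `g_{5,2}`: nonzero brackets `[x₁,x₂]=x₄`, `[x₁,x₃]=x₅`. -/
def g52Bracket {N : Type*} [AddCommGroup N] (b : Fin 5 → N) (i j : Fin 5) : N :=
  match i.val, j.val with
  | 0, 1 => b 3
  | 1, 0 => -b 3
  | 0, 2 => b 4
  | 2, 0 => -b 4
  | _, _ => 0

section Aux
variable {F : Type*} [Field F] {L : Type*} [LieRing L] [LieAlgebra F L] [Module.Finite F L]

theorem key_contra (N : LieIdeal F L)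
    (hmax : ∀ I : LieIdeal F L, LieModule.IsNilpotent I I → I ≤ N)
    (y : L) (hy : y ∉ N)
    (W₁ W₂ W₃ : Submodule F L)
    (hideal : ∀ x m : L, m ∈ N.toSubmodule ⊔ (F ∙ y) → ⁅x, m⁆ ∈ N.toSubmodule ⊔ (F ∙ y))
    (h0 : ∀ m x : L, m ∈ N.toSubmodule ⊔ (F ∙ y) → x ∈ N.toSubmodule ⊔ (F ∙ y) → ⁅m, x⁆ ∈ W₁)
    (h1 : ∀ m x : L, m ∈ N.toSubmodule ⊔ (F ∙ y) → x ∈ W₁ → ⁅m, x⁆ ∈ W₂)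
    (h2 : ∀ m x : L, m ∈ N.toSubmodule ⊔ (F ∙ y) → x ∈ W₂ → ⁅m, x⁆ ∈ W₃)
    (h3 : ∀ m x : L, m ∈ N.toSubmodule ⊔ (F ∙ y) → x ∈ W₃ → ⁅m, x⁆ = 0) :
    False := by
  set S : Submodule F L := N.toSubmodule ⊔ (F ∙ y) with hS
  let I : LieIdeal F L := { toSubmodule := S, lie_mem := fun {x m} hm => hideal x m hm }
  have hyI : y ∈ I := Submodule.mem_sup_right (Submodule.mem_span_singleton_self y)
  have hmem : ∀ z : L, z ∈ I → z ∈ S := fun z h => h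
  have hnil : LieModule.IsNilpotent I I := by
    change LieRing.IsNilpotent I
    rw [LieAlgebra.isNilpotent_iff_forall (R := F)]
    intro x
    refine ⟨4, ?_⟩
    ext m
    have hx : (x : L) ∈ S := x.2
    have hm : (m : L) ∈ S := m.2
    have e : (((LieAlgebra.ad F I x ^ 4) m : I) : L)
        = ⁅(x : L), ⁅(x : L), ⁅(x : L), ⁅(x : L), (m : L)⁆⁆⁆⁆ := by
      simp [pow_succ, LieAlgebra.ad_apply, LieIdeal.coe_bracket_of_module]
    have : ⁅(x : L), ⁅(x : L), ⁅(x : L), ⁅(x : L), (m : L)⁆⁆⁆⁆ = 0 :=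
      h3 _ _ hx (h2 _ _ hx (h1 _ _ hx (h0 _ _ hx hm)))
    simp only [LinearMap.zero_apply]
    rw [e, this]
    simp
  exact hy (hmax I hnil hyI)

theorem center_le_max (N : LieIdeal F L)
    (hmax : ∀ I : LieIdeal F L, LieModule.IsNilpotent I I → I ≤ N) :
    LieAlgebra.center F L ≤ N := by
  refine hmax _ ?_
  haveI : LieModule.IsTrivial (LieAlgebra.center F L) (LieAlgebra.center F L) :=
    ⟨fun x m => Subtype.ext (((LieModule.mem_maxTrivSubmodule F L L _).mp m.2) x)⟩
  infer_instance

theorem sup_lie_mem_left (N : LieIdeal F L) (y : L) :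
    ∀ m ∈ N.toSubmodule ⊔ (F ∙ y), ∀ x ∈ N.toSubmodule ⊔ (F ∙ y),
      ⁅m, x⁆ ∈ N.toSubmodule := by
  intro m hm x hx
  obtain ⟨n, hn, z, hz, rfl⟩ := Submodule.mem_sup.mp hm
  obtain ⟨c, rfl⟩ := Submodule.mem_span_singleton.mp hz
  obtain ⟨n', hn', z', hz', rfl⟩ := Submodule.mem_sup.mp hx
  obtain ⟨c', rfl⟩ := Submodule.mem_span_singleton.mp hz'
  have h1 : ⁅n, n' + c' • y⁆ ∈ N.toSubmodule := by
    rw [← lie_skew]; exact neg_mem (N.lie_mem hn)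
  have h2 : ⁅c • y, n'⁆ ∈ N.toSubmodule := N.lie_mem hn'
  have h3 : ⁅c • y, c' • y⁆ = 0 := by
    rw [lie_smul, smul_lie, lie_self, smul_zero, smul_zero]
  have hsplit : ⁅n + c • y, n' + c' • y⁆
      = ⁅n, n' + c' • y⁆ + ⁅c • y, n'⁆ + ⁅c • y, c' • y⁆ := by
    simp only [add_lie, lie_add]; abel
  rw [hsplit, h3, add_zero]
  exact add_mem h1 h2

theorem sup_lie_ideal (N : LieIdeal F L) (y : L)
    (hy : ∀ x : L, ⁅x, y⁆ ∈ N.toSubmodule ⊔ (F ∙ y)) :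
    ∀ (x : L), ∀ m ∈ N.toSubmodule ⊔ (F ∙ y), ⁅x, m⁆ ∈ N.toSubmodule ⊔ (F ∙ y) := by
  intro x m hm
  obtain ⟨n, hn, z, hz, rfl⟩ := Submodule.mem_sup.mp hm
  obtain ⟨c, rfl⟩ := Submodule.mem_span_singleton.mp hz
  rw [lie_add, lie_smul]
  exact add_mem (Submodule.mem_sup_left (N.lie_mem hn)) (Submodule.smul_mem _ _ (hy x))

theorem exist_y (hdimL : Module.finrank F L = 7) (N : LieIdeal F L)
    (hdimN : Module.finrank F N = 5)
    (σ : L →ₗ[F] F) (hσN : N.toSubmodule ≤ LinearMap.ker σ)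
    (hσbr : ∀ u v : L, σ ⁅u, v⁆ = 0) :
    ∃ y : L, y ∉ N ∧ σ y = 0 ∧ ∀ x : L, ⁅x, y⁆ ∈ N.toSubmodule ⊔ (F ∙ y) := by
  have hfin : FiniteDimensional F L := inferInstance
  have hNfin : Module.finrank F N.toSubmodule = 5 := hdimN
  -- pick u v spanning L over N
  have hq : Module.finrank F (L ⧸ N.toSubmodule) = 2 := by
    have := Submodule.finrank_quotient_add_finrank N.toSubmodule
    omega
  let c := Module.finBasisOfFinrankEq F (L ⧸ N.toSubmodule) hq
  obtain ⟨u, hu⟩ := Submodule.mkQ_surjective N.toSubmodule (c 0)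
  obtain ⟨v, hv⟩ := Submodule.mkQ_surjective N.toSubmodule (c 1)
  have htop : ∀ x : L, x ∈ N.toSubmodule ⊔ (Submodule.span F {u, v}) := by
    intro x
    have hx : N.toSubmodule.mkQ x ∈ Submodule.span F {c 0, c 1} := by
      have : Submodule.span F (Set.range c) = ⊤ := c.span_eq
      have h2 : Set.range c = {c 0, c 1} := by
        ext z; simp [Set.range, Fin.exists_fin_two, eq_comm]
      rw [h2] at this
      rw [this]; trivial
    rw [Submodule.mem_span_pair] at hx
    obtain ⟨a, b, hab⟩ := hx
    have : N.toSubmodule.mkQ (x - (a • u + b • v)) = 0 := by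
      rw [map_sub, map_add, map_smul, map_smul, hu, hv, ← hab]; abel
    rw [Submodule.mkQ_apply, Submodule.Quotient.mk_eq_zero] at this
    have hx2 : a • u + b • v ∈ Submodule.span F {u, v} :=
      Submodule.mem_span_pair.mpr ⟨a, b, rfl⟩
    have := Submodule.add_mem_sup this hx2
    simpa using this
  set w := ⁅u, v⁆ with hw
  have hbr : ∀ x x' : L, ⁅x, x'⁆ ∈ N.toSubmodule ⊔ (F ∙ w) := by
    intro x x'
    obtain ⟨n, hn, z, hz, rfl⟩ := Submodule.mem_sup.mp (htop x)
    obtain ⟨n', hn', z', hz', rfl⟩ := Submodule.mem_sup.mp (htop x')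
    obtain ⟨a, b, rfl⟩ := Submodule.mem_span_pair.mp hz
    obtain ⟨a', b', rfl⟩ := Submodule.mem_span_pair.mp hz'
    have t1 : ⁅n, n' + (a' • u + b' • v)⁆ ∈ N.toSubmodule := by
      rw [← lie_skew]; exact neg_mem (N.lie_mem hn)
    have t2 : ⁅a • u + b • v, n'⁆ ∈ N.toSubmodule := N.lie_mem hn'
    have t3 : ⁅a • u + b • v, a' • u + b' • v⁆ ∈ (F ∙ w) := by
      have hvu : ⁅v, u⁆ = -w := by rw [hw, ← lie_skew]
      simp only [lie_add, add_lie, lie_smul, smul_lie, lie_self, smul_zero, add_zero, zero_add,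
        hvu, ← hw]
      refine add_mem ?_ ?_ <;>
      · refine Submodule.smul_mem _ _ (Submodule.smul_mem _ _ ?_)
        first
          | exact Submodule.mem_span_singleton_self w
          | exact neg_mem (Submodule.mem_span_singleton_self w)
    have hsplit : ⁅n + (a • u + b • v), n' + (a' • u + b' • v)⁆
        = ⁅n, n' + (a' • u + b' • v)⁆ + ⁅a • u + b • v, n'⁆
          + ⁅a • u + b • v, a' • u + b' • v⁆ := by
      simp only [add_lie, lie_add]; abel
    rw [hsplit]
    exact add_mem (add_mem (Submodule.mem_sup_left t1) (Submodule.mem_sup_left t2))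
      (Submodule.mem_sup_right t3)
  by_cases hwN : w ∈ N.toSubmodule
  · have hker : ¬ (LinearMap.ker σ ≤ N.toSubmodule) := by
      intro hle
      have h1 : Module.finrank F (LinearMap.ker σ) ≤ 5 := hNfin ▸ Submodule.finrank_mono hle
      have h2 := LinearMap.finrank_range_add_finrank_ker σ
      have h3 : Module.finrank F (LinearMap.range σ) ≤ 1 := by
        simpa using Submodule.finrank_le (LinearMap.range σ)
      omega
    obtain ⟨y, hyker, hyN⟩ := SetLike.not_le_iff_exists.mp hker
    refine ⟨y, fun h => hyN (N.mem_toSubmodule.mpr h), LinearMap.mem_ker.mp hyker, ?_⟩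
    intro x
    have hspan : (F ∙ w) ≤ N.toSubmodule := by
      rw [Submodule.span_singleton_le_iff_mem]; exact hwN
    have hb2 : ⁅x, y⁆ ∈ N.toSubmodule := by
      have := hbr x y; rw [sup_eq_left.mpr hspan] at this; exact this
    exact Submodule.mem_sup_left hb2
  · exact ⟨w, fun h => hwN (N.mem_toSubmodule.mpr h), hσbr u v, fun x => hbr x w⟩

theorem build_sigma (N : LieIdeal F L) (hdimN : Module.finrank F N = 5)
    (Zs : Submodule F L) (hZN : Zs ≤ N.toSubmodule) (hZrank : 4 ≤ Module.finrank F Zs)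
    (hcentral : ∀ z : L, z ∈ Zs → ∀ x : L, ⁅x, z⁆ = 0) :
    (∀ a ∈ N.toSubmodule, ∀ b ∈ N.toSubmodule, ⁅a, b⁆ = 0) ∧
    ∃ σ : L →ₗ[F] F, N.toSubmodule ≤ LinearMap.ker σ ∧ (∀ u v : L, σ ⁅u, v⁆ = 0) ∧
      (∀ y : L, σ y = 0 → ∀ x ∈ N.toSubmodule, ⁅y, x⁆ ∈ Zs) := by
  have hcentral' : ∀ z : L, z ∈ Zs → ∀ x : L, ⁅z, x⁆ = 0 := fun z hz x => by
    rw [← lie_skew, hcentral z hz x, neg_zero]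
  obtain ⟨n₀, hn₀N, hNsub⟩ : ∃ n₀, n₀ ∈ N.toSubmodule ∧ N.toSubmodule ≤ Zs ⊔ (F ∙ n₀) := by
    by_cases hle : N.toSubmodule ≤ Zs
    · exact ⟨0, zero_mem _, le_trans hle le_sup_left⟩
    · obtain ⟨n₀, hn₀, hn₀Z⟩ := SetLike.not_le_iff_exists.mp hle
      refine ⟨n₀, hn₀, ?_⟩
      have hsub : Zs ⊔ (F ∙ n₀) ≤ N.toSubmodule :=
        sup_le hZN (by rwa [Submodule.span_singleton_le_iff_mem])
      have hlt2 : Zs < Zs ⊔ (F ∙ n₀) := by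
        refine lt_of_le_of_ne le_sup_left ?_
        intro he
        exact hn₀Z (he ▸ Submodule.mem_sup_right (Submodule.mem_span_singleton_self n₀))
      have hr := Submodule.finrank_lt_finrank_of_lt hlt2
      have h5 : Module.finrank F N.toSubmodule ≤ Module.finrank F ↥(Zs ⊔ (F ∙ n₀)) := by
        have hN5 : Module.finrank F N.toSubmodule = 5 := hdimN
        omega
      exact (Submodule.eq_of_le_of_finrank_le hsub h5).ge
  have hdec : ∀ x ∈ N.toSubmodule, ∃ z ∈ Zs, ∃ t : F, x = z + t • n₀ := by
    intro x hx
    obtain ⟨z, hz, z2, hz2, rfl⟩ := Submodule.mem_sup.mp (hNsub hx)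
    obtain ⟨t, rfl⟩ := Submodule.mem_span_singleton.mp hz2
    exact ⟨z, hz, t, rfl⟩
  have hab : ∀ a ∈ N.toSubmodule, ∀ b ∈ N.toSubmodule, ⁅a, b⁆ = 0 := by
    intro a ha b hb
    obtain ⟨z, hz, s, rfl⟩ := hdec a ha
    obtain ⟨z', hz', t, rfl⟩ := hdec b hb
    simp [lie_add, add_lie, lie_smul, smul_lie, hcentral' z hz, hcentral z' hz', lie_self,
      hcentral _ hz]
  refine ⟨hab, ?_⟩
  by_cases hn₀Z : n₀ ∈ Zs
  · refine ⟨0, by simp, fun u v => rfl, ?_⟩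
    have hNZ : N.toSubmodule ≤ Zs := by
      refine le_trans hNsub (sup_le le_rfl ?_)
      rwa [Submodule.span_singleton_le_iff_mem]
    intro y _ x hx
    rw [hcentral x (hNZ hx) y]
    exact zero_mem _
  · obtain ⟨f0, hf0, hfmap⟩ := Submodule.exists_dual_map_eq_bot_of_notMem hn₀Z inferInstance
    set f : L →ₗ[F] F := (f0 n₀)⁻¹ • f0 with hf
    have hfn₀ : f n₀ = 1 := by simp [hf, inv_mul_cancel₀ hf0]
    have hfZ : ∀ z ∈ Zs, f z = 0 := by
      intro z hz
      have h1 : f0 z ∈ Zs.map f0 := Submodule.mem_map_of_mem hz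
      rw [hfmap, Submodule.mem_bot] at h1
      simp [hf, h1]
    set σ : L →ₗ[F] F := -(f ∘ₗ LieAlgebra.ad F L n₀) with hσdef
    have hσ : ∀ x : L, σ x = f ⁅x, n₀⁆ := by
      intro x
      rw [show σ x = -(f ⁅n₀, x⁆) from rfl, ← map_neg, lie_skew]
    have hn₀N' : n₀ ∈ N := N.mem_toSubmodule.mp hn₀N
    have hval : ∀ x : L, ∃ z ∈ Zs, ⁅x, n₀⁆ = z + σ x • n₀ := by
      intro x
      obtain ⟨z, hz, t, ht⟩ := hdec ⁅x, n₀⁆ (N.mem_toSubmodule.mpr (N.lie_mem hn₀N'))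
      refine ⟨z, hz, ?_⟩
      have : σ x = t := by
        rw [hσ, ht, map_add, map_smul, hfZ z hz, hfn₀]
        simp
      rw [this, ← ht]
    have hσN : N.toSubmodule ≤ LinearMap.ker σ := by
      intro x hx
      rw [LinearMap.mem_ker, hσ, hab x hx n₀ hn₀N, map_zero]
    have hσbr : ∀ u v : L, σ ⁅u, v⁆ = 0 := by
      intro u v
      obtain ⟨zv, hzv, hv⟩ := hval v
      obtain ⟨zu, hzu, hu⟩ := hval u
      rw [hσ, lie_lie, map_sub, hv, hu]
      rw [lie_add, lie_add, lie_smul, lie_smul, hcentral zv hzv u, hcentral zu hzu v]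
      rw [zero_add, zero_add, map_smul, map_smul, hσ, hσ]
      rw [smul_eq_mul, smul_eq_mul, mul_comm, sub_self]
    refine ⟨σ, hσN, hσbr, ?_⟩
    intro y hy x hx
    obtain ⟨z, hz, t, rfl⟩ := hdec x hx
    obtain ⟨z', hz', hy'⟩ := hval y
    rw [hy, zero_smul, add_zero] at hy'
    rw [lie_add, hcentral z hz y, zero_add, lie_smul, hy']
    exact Submodule.smul_mem _ _ hz'

end Aux
section Main
variable {F : Type*} [Field F] {L : Type*} [LieRing L] [LieAlgebra F L] [Module.Finite F L]

theorem part1 (hdimL : Module.finrank F L = 7) (N : LieIdeal F L)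
    (hmax : ∀ I : LieIdeal F L, LieModule.IsNilpotent I I → I ≤ N)
    (hdimN : Module.finrank F N = 5) :
    Module.finrank F (LieAlgebra.center F L) ≤ 3 := by
  by_contra hlt
  push_neg at hlt
  set Zs : Submodule F L := (LieAlgebra.center F L).toSubmodule with hZs
  have hZrank : 4 ≤ Module.finrank F Zs := hlt
  have hZN : Zs ≤ N.toSubmodule := fun x hx => center_le_max N hmax hx
  have hcentral : ∀ z : L, z ∈ Zs → ∀ x : L, ⁅x, z⁆ = 0 := fun z hz x =>
    (LieModule.mem_maxTrivSubmodule F L L z).mp hz x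
  obtain ⟨hab, σ, hσN, hσbr, hkey⟩ := build_sigma N hdimN Zs hZN hZrank hcentral
  obtain ⟨y, hyN, hyσ, hyid⟩ := exist_y hdimL N hdimN σ hσN hσbr
  refine key_contra N hmax y hyN N.toSubmodule Zs Zs
    (sup_lie_ideal N y hyid) (fun m x hm hx => sup_lie_mem_left N y m hm x hx) ?_ ?_ ?_
  · intro m x hm hx
    obtain ⟨n, hn, z, hz, rfl⟩ := Submodule.mem_sup.mp hm
    obtain ⟨c, rfl⟩ := Submodule.mem_span_singleton.mp hz
    rw [add_lie, smul_lie, hab n hn x hx, zero_add]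
    exact Submodule.smul_mem _ _ (hkey y hyσ x hx)
  · intro m x hm hx
    rw [hcentral x hx m]
    exact zero_mem _
  · intro m x hm hx
    exact hcentral x hx m


theorem part2 (hdimL : Module.finrank F L = 7) (N : LieIdeal F L)
    (hmax : ∀ I : LieIdeal F L, LieModule.IsNilpotent I I → I ≤ N)
    (hdimN : Module.finrank F N = 5)
    (b : Module.Basis (Fin 5) F N) (htable : ∀ i j : Fin 5, ⁅b i, b j⁆ = g52Bracket b i j) :
    Module.finrank F (LieAlgebra.center F L) ≤ 1 := by
  by_contra hlt
  push_neg at hlt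
  set e : Fin 5 → L := fun i => ((b i : N) : L) with he_def
  have hcoe : ∀ i j : Fin 5, ⁅e i, e j⁆ = ((g52Bracket b i j : N) : L) := by
    intro i j
    rw [he_def]
    rw [← htable i j]; rfl
  have h01 : ⁅e 0, e 1⁆ = e 3 := by rw [hcoe]; rfl
  have h02 : ⁅e 0, e 2⁆ = e 4 := by rw [hcoe]; rfl
  have h10 : ⁅e 1, e 0⁆ = -e 3 := by
    rw [← lie_skew, h01]
  have h20 : ⁅e 2, e 0⁆ = -e 4 := by
    rw [← lie_skew, h02]
  have hz : ∀ i j : Fin 5, g52Bracket b i j = 0 → ⁅e i, e j⁆ = 0 := by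
    intro i j h
    rw [hcoe, h]
    rfl
  have hli : LinearIndependent F e :=
    b.linearIndependent.map' N.toSubmodule.subtype (Submodule.ker_subtype _)
  have hpair : ∀ c d : F, c • e 3 + d • e 4 = 0 → c = 0 ∧ d = 0 := by
    intro c d h
    have h5 : ∑ i : Fin 5, (![0, 0, 0, c, d] : Fin 5 → F) i • e i = 0 := by
      simpa [Fin.sum_univ_five] using h
    have hall := Fintype.linearIndependent_iff.mp hli _ h5
    exact ⟨by simpa using hall 3, by simpa using hall 4⟩
  set W3 : Submodule F L := Submodule.span F (Set.range ![e 3, e 4]) with hW3def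
  set V : Submodule F L := Submodule.span F (Set.range ![e 1, e 2, e 3, e 4]) with hVdef
  have hmemV : ∀ i : Fin 4, (![e 1, e 2, e 3, e 4] : Fin 4 → L) i ∈ V :=
    fun i => Submodule.subset_span ⟨i, rfl⟩
  have he1V : e 1 ∈ V := hmemV 0
  have he2V : e 2 ∈ V := hmemV 1
  have he3V : e 3 ∈ V := hmemV 2
  have he4V : e 4 ∈ V := hmemV 3
  have he3W : e 3 ∈ W3 := Submodule.subset_span ⟨0, rfl⟩
  have he4W : e 4 ∈ W3 := Submodule.subset_span ⟨1, rfl⟩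
  have hW3V : W3 ≤ V := by
    rw [hW3def, Submodule.span_le]
    rintro z ⟨i, rfl⟩
    fin_cases i
    · exact he3V
    · exact he4V
  have hVdec : ∀ v ∈ V, ∃ d : Fin 4 → F,
      v = d 0 • e 1 + d 1 • e 2 + d 2 • e 3 + d 3 • e 4 := by
    intro v hv
    rw [hVdef] at hv
    obtain ⟨d, hd⟩ := (Submodule.mem_span_range_iff_exists_fun F).mp hv
    refine ⟨d, ?_⟩
    rw [← hd]
    simp [Fin.sum_univ_four]
  have hW3dec : ∀ w ∈ W3, ∃ d : Fin 2 → F, w = d 0 • e 3 + d 1 • e 4 := by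
    intro w hw
    rw [hW3def] at hw
    obtain ⟨d, hd⟩ := (Submodule.mem_span_range_iff_exists_fun F).mp hw
    refine ⟨d, ?_⟩
    rw [← hd]
    simp [Fin.sum_univ_two]
  have hNmem : ∀ i, e i ∈ N.toSubmodule := fun i => (b i).2
  have hVN : V ≤ N.toSubmodule := by
    rw [hVdef, Submodule.span_le]
    rintro z ⟨i, rfl⟩
    fin_cases i <;> apply hNmem
  have hW3N : W3 ≤ N.toSubmodule := le_trans hW3V hVN
  have hNdec : ∀ z ∈ N.toSubmodule, ∃ c : F, ∃ v ∈ V, z = c • e 0 + v := by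
    intro z hzN
    have hsum := b.sum_repr ⟨z, hzN⟩
    have hco : z = ∑ i, b.repr ⟨z, hzN⟩ i • e i := by
      conv_lhs => rw [show z = ((⟨z, hzN⟩ : N) : L) from rfl, ← hsum]
      push_cast
      rfl
    refine ⟨b.repr ⟨z, hzN⟩ 0, ∑ i : Fin 4, b.repr ⟨z, hzN⟩ i.succ • e i.succ, ?_, ?_⟩
    · refine Submodule.sum_mem _ fun i _ => Submodule.smul_mem _ _ ?_
      fin_cases i
      · exact he1V
      · exact he2V
      · exact he3V
      · exact he4V
    · conv_lhs => rw [hco]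
      exact Fin.sum_univ_succ _
  have hTmem : ∀ x : L, ⁅x, e 0⁆ ∈ N.toSubmodule := fun x => N.lie_mem (hNmem 0)
  let T : L →ₗ[F] N :=
    { toFun := fun x => ⟨⁅x, e 0⁆, hTmem x⟩
      map_add' := fun x y => Subtype.ext (by simp [add_lie])
      map_smul' := fun c x => Subtype.ext (by simp [smul_lie]) }
  let σ : L →ₗ[F] F := (b.coord 0) ∘ₗ T
  have hσapp : ∀ x : L, σ x = b.repr ⟨⁅x, e 0⁆, hTmem x⟩ 0 := fun x => rfl
  have hreprV : ∀ (v : L) (hv : v ∈ V), b.repr ⟨v, hVN hv⟩ 0 = 0 := by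
    intro v hv
    obtain ⟨d, hd⟩ := hVdec v hv
    have hsub : (⟨v, hVN hv⟩ : N) = d 0 • b 1 + d 1 • b 2 + d 2 • b 3 + d 3 • b 4 :=
      Subtype.ext (by push_cast; simpa [he_def] using hd)
    rw [hsub]
    simp [Module.Basis.repr_self, Finsupp.single_apply]
  have hσzero : ∀ (x : L) (c : F) (v : L) (hv : v ∈ V), ⁅x, e 0⁆ = c • e 0 + v → σ x = c := by
    intro x c v hv hx
    rw [hσapp]
    have hsub : (⟨⁅x, e 0⁆, hTmem x⟩ : N) = c • b 0 + ⟨v, hVN hv⟩ :=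
      Subtype.ext (by push_cast; simpa [he_def] using hx)
    rw [hsub, map_add, map_smul, Finsupp.add_apply, Finsupp.smul_apply, Module.Basis.repr_self,
      hreprV v hv, Finsupp.single_eq_same, smul_eq_mul, mul_one, add_zero]
  have hσspec : ∀ x : L, ∃ v ∈ V, ⁅x, e 0⁆ = σ x • e 0 + v := by
    intro x
    obtain ⟨c, v, hv, hx⟩ := hNdec _ (hTmem x)
    exact ⟨v, hv, by rw [hσzero x c v hv hx]; exact hx⟩
  have hVV : ∀ v ∈ V, ∀ v' ∈ V, ⁅v, v'⁆ = 0 := by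
    intro v hv v' hv'
    obtain ⟨d, rfl⟩ := hVdec v hv
    obtain ⟨d', rfl⟩ := hVdec v' hv'
    simp only [lie_add, add_lie, lie_smul, smul_lie,
      hz 1 1 rfl, hz 1 2 rfl, hz 1 3 rfl, hz 1 4 rfl,
      hz 2 1 rfl, hz 2 2 rfl, hz 2 3 rfl, hz 2 4 rfl,
      hz 3 1 rfl, hz 3 2 rfl, hz 3 3 rfl, hz 3 4 rfl,
      hz 4 1 rfl, hz 4 2 rfl, hz 4 3 rfl, hz 4 4 rfl,
      smul_zero, add_zero, zero_add]
  have hVe0 : ∀ v ∈ V, ⁅v, e 0⁆ ∈ W3 := by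
    intro v hv
    obtain ⟨d, rfl⟩ := hVdec v hv
    simp only [add_lie, smul_lie, h10, h20, hz 3 0 rfl, hz 4 0 rfl, smul_zero, add_zero, smul_neg]
    exact add_mem (neg_mem (Submodule.smul_mem _ _ he3W)) (neg_mem (Submodule.smul_mem _ _ he4W))
  have he0VW : ∀ v ∈ V, ⁅e 0, v⁆ ∈ W3 := by
    intro v hv
    obtain ⟨d, rfl⟩ := hVdec v hv
    rw [lie_add, lie_add, lie_add, lie_smul, lie_smul, lie_smul, lie_smul, h01, h02,
      hz 0 3 rfl, hz 0 4 rfl, smul_zero, smul_zero, add_zero, add_zero]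
    exact add_mem (Submodule.smul_mem _ _ he3W) (Submodule.smul_mem _ _ he4W)
  have hσN : N.toSubmodule ≤ LinearMap.ker σ := by
    intro z hzN
    rw [LinearMap.mem_ker]
    obtain ⟨c, v, hv, rfl⟩ := hNdec z hzN
    have hbr : ⁅c • e 0 + v, e 0⁆ = (0 : F) • e 0 + ⁅v, e 0⁆ := by
      rw [add_lie, smul_lie, lie_self, smul_zero, zero_add, zero_smul, zero_add]
    exact hσzero _ 0 _ (hW3V (hVe0 v hv)) hbr
  have hNbr : ∀ a ∈ N.toSubmodule, ∀ a' ∈ N.toSubmodule, ⁅a, a'⁆ ∈ W3 := by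
    intro a ha a' ha'
    obtain ⟨c, v, hv, rfl⟩ := hNdec a ha
    obtain ⟨c', v', hv', rfl⟩ := hNdec a' ha'
    have hsplit : ⁅c • e 0 + v, c' • e 0 + v'⁆
        = (c * c') • ⁅e 0, e 0⁆ + c • ⁅e 0, v'⁆ + c' • ⁅v, e 0⁆ + ⁅v, v'⁆ := by
      simp only [add_lie, lie_add, smul_lie, lie_smul]
      module
    rw [hsplit, lie_self, smul_zero, hVV v hv v' hv', add_zero, zero_add]
    exact add_mem (Submodule.smul_mem _ _ (he0VW v' hv')) (Submodule.smul_mem _ _ (hVe0 v hv))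
  have hP1 : ∀ x : L, ⁅x, e 1⁆ ∈ V ∧ ⁅x, e 2⁆ ∈ V := by
    intro x
    obtain ⟨c1, v1, hv1, hx1⟩ := hNdec _ (N.lie_mem (hNmem 1) : ⁅x, e 1⁆ ∈ N.toSubmodule)
    obtain ⟨c2, v2, hv2, hx2⟩ := hNdec _ (N.lie_mem (hNmem 2) : ⁅x, e 2⁆ ∈ N.toSubmodule)
    have hjac : ⁅⁅x, e 1⁆, e 2⁆ + ⁅e 1, ⁅x, e 2⁆⁆ = 0 := by
      rw [← leibniz_lie, hz 1 2 rfl, lie_zero]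
    have hA : ⁅⁅x, e 1⁆, e 2⁆ = c1 • e 4 := by
      rw [hx1, add_lie, smul_lie, h02, hVV v1 hv1 _ he2V, add_zero]
    have hB : ⁅e 1, ⁅x, e 2⁆⁆ = -(c2 • e 3) := by
      rw [hx2, lie_add, lie_smul, h10, hVV _ he1V v2 hv2, add_zero, smul_neg]
    rw [hA, hB] at hjac
    have hcc := hpair (-c2) c1 (by rw [neg_smul, add_comm]; exact hjac)
    constructor
    · rw [hx1, show c1 = 0 from hcc.2, zero_smul, zero_add]; exact hv1
    · rw [hx2, show c2 = 0 from neg_eq_zero.mp hcc.1, zero_smul, zero_add]; exact hv2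
  have hZle : (LieAlgebra.center F L).toSubmodule ≤ W3 := by
    intro z hzZ
    have hzc : ∀ x : L, ⁅x, z⁆ = 0 := (LieModule.mem_maxTrivSubmodule F L L z).mp hzZ
    have hzN : z ∈ N.toSubmodule := center_le_max N hmax hzZ
    obtain ⟨c, v, hv, hzdec⟩ := hNdec z hzN
    obtain ⟨d, hd⟩ := hVdec v hv
    have h1 : ⁅e 1, z⁆ = -(c • e 3) := by
      rw [hzdec, lie_add, lie_smul, h10, hVV _ he1V v hv, add_zero, smul_neg]
    have hc0 : c = 0 := by
      refine (hpair c 0 ?_).1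
      rw [zero_smul, add_zero, ← neg_neg (c • e 3), ← h1, hzc (e 1), neg_zero]
    have h0' : ⁅e 0, z⁆ = d 0 • e 3 + d 1 • e 4 := by
      rw [hzdec, lie_add, lie_smul, lie_self, smul_zero, zero_add, hd,
        lie_add, lie_add, lie_add, lie_smul, lie_smul, lie_smul, lie_smul, h01, h02,
        hz 0 3 rfl, hz 0 4 rfl, smul_zero, smul_zero, add_zero, add_zero]
    have hd01 := hpair (d 0) (d 1) (by rw [← h0', hzc (e 0)])
    rw [hzdec, hd, hc0, zero_smul, zero_add, hd01.1, hd01.2, zero_smul, zero_smul,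
      zero_add, zero_add]
    exact add_mem (Submodule.smul_mem _ _ he3W) (Submodule.smul_mem _ _ he4W)
  have hliW : LinearIndependent F ![e 3, e 4] := by
    have heq : (![e 3, e 4] : Fin 2 → L) = e ∘ ![3, 4] := by
      funext i; fin_cases i <;> rfl
    rw [heq]
    apply hli.comp
    decide
  have hW3rank : Module.finrank F W3 = 2 := by
    rw [hW3def, finrank_span_eq_card hliW]
    rfl
  have hEq : (LieAlgebra.center F L).toSubmodule = W3 :=
    Submodule.eq_of_le_of_finrank_le hZle (by rw [hW3rank]; exact hlt)
  have he3Z : e 3 ∈ LieAlgebra.center F L := by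
    have h : e 3 ∈ (LieAlgebra.center F L).toSubmodule := by rw [hEq]; exact he3W
    exact h
  have he4Z : e 4 ∈ LieAlgebra.center F L := by
    have h : e 4 ∈ (LieAlgebra.center F L).toSubmodule := by rw [hEq]; exact he4W
    exact h
  have hc3 : ∀ x : L, ⁅x, e 3⁆ = 0 := fun x =>
    (LieModule.mem_maxTrivSubmodule F L L _).mp he3Z x
  have hc4 : ∀ x : L, ⁅x, e 4⁆ = 0 := fun x =>
    (LieModule.mem_maxTrivSubmodule F L L _).mp he4Z x
  have hP2 : ∀ x : L, σ x = 0 → ⁅x, e 1⁆ ∈ W3 := by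
    intro x hσx
    obtain ⟨v, hv, hx0⟩ := hσspec x
    rw [hσx, zero_smul, zero_add] at hx0
    obtain ⟨d, hd⟩ := hVdec _ (hP1 x).1
    have hjac : ⁅⁅x, e 0⁆, e 1⁆ + ⁅e 0, ⁅x, e 1⁆⁆ = 0 := by
      rw [← leibniz_lie, h01, hc3 x]
    have hA : ⁅⁅x, e 0⁆, e 1⁆ = 0 := by rw [hx0]; exact hVV v hv _ he1V
    have hB : ⁅e 0, ⁅x, e 1⁆⁆ = d 0 • e 3 + d 1 • e 4 := by
      rw [hd, lie_add, lie_add, lie_add, lie_smul, lie_smul, lie_smul, lie_smul, h01, h02,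
        hz 0 3 rfl, hz 0 4 rfl, smul_zero, smul_zero, add_zero, add_zero]
    rw [hA, hB, zero_add] at hjac
    obtain ⟨h0', h1'⟩ := hpair _ _ hjac
    rw [hd, h0', h1', zero_smul, zero_smul, zero_add, zero_add]
    exact add_mem (Submodule.smul_mem _ _ he3W) (Submodule.smul_mem _ _ he4W)
  have hP3 : ∀ x : L, σ x = 0 → ⁅x, e 2⁆ ∈ W3 := by
    intro x hσx
    obtain ⟨v, hv, hx0⟩ := hσspec x
    rw [hσx, zero_smul, zero_add] at hx0
    obtain ⟨d, hd⟩ := hVdec _ (hP1 x).2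
    have hjac : ⁅⁅x, e 0⁆, e 2⁆ + ⁅e 0, ⁅x, e 2⁆⁆ = 0 := by
      rw [← leibniz_lie, h02, hc4 x]
    have hA : ⁅⁅x, e 0⁆, e 2⁆ = 0 := by rw [hx0]; exact hVV v hv _ he2V
    have hB : ⁅e 0, ⁅x, e 2⁆⁆ = d 0 • e 3 + d 1 • e 4 := by
      rw [hd, lie_add, lie_add, lie_add, lie_smul, lie_smul, lie_smul, lie_smul, h01, h02,
        hz 0 3 rfl, hz 0 4 rfl, smul_zero, smul_zero, add_zero, add_zero]
    rw [hA, hB, zero_add] at hjac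
    obtain ⟨h0', h1'⟩ := hpair _ _ hjac
    rw [hd, h0', h1', zero_smul, zero_smul, zero_add, zero_add]
    exact add_mem (Submodule.smul_mem _ _ he3W) (Submodule.smul_mem _ _ he4W)
  have hLV : ∀ x : L, ∀ v ∈ V, ⁅x, v⁆ ∈ V := by
    intro x v hv
    obtain ⟨d, rfl⟩ := hVdec v hv
    rw [lie_add, lie_add, lie_add, lie_smul, lie_smul, lie_smul, lie_smul, hc3 x, hc4 x,
      smul_zero, smul_zero, add_zero, add_zero]
    exact add_mem (Submodule.smul_mem _ _ (hP1 x).1) (Submodule.smul_mem _ _ (hP1 x).2)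
  have hσbr : ∀ u w : L, σ ⁅u, w⁆ = 0 := by
    intro u w
    obtain ⟨vu, hvu, hu⟩ := hσspec u
    obtain ⟨vw, hvw, hw⟩ := hσspec w
    have hbig : ⁅⁅u, w⁆, e 0⁆ = (0 : F) • e 0 +
        ((σ w • vu + ⁅u, vw⁆) - (σ u • vw + ⁅w, vu⁆)) := by
      rw [lie_lie, hw, hu, lie_add, lie_add, lie_smul, lie_smul, hu, hw]
      module
    have hmem : ((σ w • vu + ⁅u, vw⁆) - (σ u • vw + ⁅w, vu⁆)) ∈ V :=
      sub_mem (add_mem (Submodule.smul_mem _ _ hvu) (hLV u vw hvw))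
        (add_mem (Submodule.smul_mem _ _ hvw) (hLV w vu hvu))
    exact hσzero _ _ _ hmem hbig
  obtain ⟨y, hyN, hyσ, hyid⟩ := exist_y hdimL N hdimN σ hσN hσbr
  have hy0 : ⁅y, e 0⁆ ∈ V := by
    obtain ⟨v, hv, h⟩ := hσspec y
    rw [h, hyσ, zero_smul, zero_add]
    exact hv
  refine key_contra N hmax y hyN N.toSubmodule V W3
    (sup_lie_ideal N y hyid) (fun m x hm hx => sup_lie_mem_left N y m hm x hx) ?_ ?_ ?_
  · intro m x hm hx
    obtain ⟨n, hn, zz, hzz, rfl⟩ := Submodule.mem_sup.mp hm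
    obtain ⟨c, rfl⟩ := Submodule.mem_span_singleton.mp hzz
    rw [add_lie, smul_lie]
    refine add_mem (hW3V (hNbr n hn x hx)) (Submodule.smul_mem _ _ ?_)
    obtain ⟨c', v, hv, rfl⟩ := hNdec x hx
    rw [lie_add, lie_smul]
    exact add_mem (Submodule.smul_mem _ _ hy0) (hLV y v hv)
  · intro m x hm hx
    obtain ⟨n, hn, zz, hzz, rfl⟩ := Submodule.mem_sup.mp hm
    obtain ⟨c, rfl⟩ := Submodule.mem_span_singleton.mp hzz
    rw [add_lie, smul_lie]
    refine add_mem (hNbr n hn x (hVN hx)) (Submodule.smul_mem _ _ ?_)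
    obtain ⟨d, rfl⟩ := hVdec x hx
    rw [lie_add, lie_add, lie_add, lie_smul, lie_smul, lie_smul, lie_smul, hc3 y, hc4 y,
      smul_zero, smul_zero, add_zero, add_zero]
    exact add_mem (Submodule.smul_mem _ _ (hP2 y hyσ)) (Submodule.smul_mem _ _ (hP3 y hyσ))
  · intro m x hm hx
    obtain ⟨d, rfl⟩ := hW3dec x hx
    rw [lie_add, lie_smul, lie_smul, hc3 m, hc4 m, smul_zero, smul_zero, add_zero]


end Main

/-- If `L` is a 7-dimensional solvable Lie algebra over a field of characteristic zero
whose nilradical (the maximal nilpotent ideal) `N` has dimension 5, then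
`dim Z(L) ≤ 3`; moreover if `N ≅ g_{5,2}` then `dim Z(L) ≤ 1`. -/
theorem center_dim_bound (F : Type*) [Field F] [CharZero F]
    (L : Type*) [LieRing L] [LieAlgebra F L] [Module.Finite F L]
    [LieAlgebra.IsSolvable L]
    (hdimL : Module.finrank F L = 7)
    (N : LieIdeal F L)
    (hnil : LieModule.IsNilpotent N N)
    (hmax : ∀ I : LieIdeal F L, LieModule.IsNilpotent I I → I ≤ N)
    (hdimN : Module.finrank F N = 5) :
    Module.finrank F (LieAlgebra.center F L) ≤ 3 ∧
      ((∃ b : Module.Basis (Fin 5) F N, ∀ i j : Fin 5, ⁅b i, b j⁆ = g52Bracket b i j) →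
        Module.finrank F (LieAlgebra.center F L) ≤ 1) := by
  refine ⟨part1 hdimL N hmax hdimN, ?_⟩
  rintro ⟨b, htable⟩
  exact part2 hdimL N hmax hdimN b htable
end
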